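/- arXiv:1508.03814 — 3 statements merged into one kernel-verified Lean document; each statement's English description precedes it below -/
import Mathlib

section
/- Let p be a prime, let Γ ⊊ F_p^* be a proper multiplicative subgroup, and let A, B ⊆ F_p be two sets such that A + B ⊆ Γ ∪ {0}. Then |A| · |B| < 4p. -/
open Finset Pointwise

/-- `A` is a multiplicative subgroup of `F_p^*`. -/
def MulSubgroup {p : ℕ} (A : Finset (ZMod p)) : Prop :=
  (0 : ZMod p) ∉ A ∧ (1 : ZMod p) ∈ A ∧ ∀ x ∈ A, ∀ y ∈ A, x * y⁻¹ ∈ A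

/-!
Since `Γ` is proper, some nontrivial multiplicative character `χ` is trivial on `Γ`. Then
`χ (a + b) = 1` whenever `a + b ≠ 0`, so `∑_{a ∈ A, b ∈ B} χ (a + b) = |A||B| - z`, where the
number `z` of pairs with `a + b = 0` is at most `min |A| |B|`. On the other hand, Cauchy–Schwarz
and the orthogonality of the shifts of `χ` bound the square of this sum by
`|A| ∑_x |∑_{b ∈ B} χ (x + b)|² = |A||B|(p - |B|)`. Hence
`(|A||B| - √(|A||B|))² ≤ |A||B| p`, i.e. `√(|A||B|) ≤ 1 + √p`, which forces `|A||B| < 4p`.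
-/

theorem lt_four_mul_of_sq_sub_le {x z q : ℝ} (hzx : z ^ 2 ≤ x) (hxz : (x - z) ^ 2 ≤ x * q)
    (hq : 1 < q) : x < 4 * q := by
  by_contra! h
  set s := √x
  have hsx : s ^ 2 = x := Real.sq_sqrt (by linarith)
  have hs : 2 < s := by nlinarith [Real.sqrt_nonneg x]
  have hzs : z ≤ s := Real.le_sqrt_of_sq_le hzx
  have hsq : (s ^ 2 - s) ^ 2 ≤ s ^ 2 * q := by
    rw [hsx]
    exact (pow_le_pow_left₀ (by nlinarith) (by linarith) 2).trans hxz
  have hs1 : (s - 1) ^ 2 ≤ q :=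
    le_of_mul_le_mul_left (by nlinarith) (by positivity : 0 < s ^ 2)
  -- `4 (s - 1) ^ 2 ≤ 4 q ≤ s ^ 2` forces `s ≤ 2`
  nlinarith

theorem norm_sum_sq_le_card_mul_sum_norm_sq {ι E : Type*} [SeminormedAddCommGroup E]
    (s : Finset ι) (f : ι → E) : ‖∑ i ∈ s, f i‖ ^ 2 ≤ #s * ∑ i ∈ s, ‖f i‖ ^ 2 :=
  (pow_le_pow_left₀ (norm_nonneg _) (norm_sum_le s f) 2).trans sq_sum_le_card_mul_sum_sq

section ZeroSumPairs

variable {G : Type*} [AddGroup G] [DecidableEq G] (A B : Finset G)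

theorem card_filter_add_eq_zero_le_left : #{ab ∈ A ×ˢ B | ab.1 + ab.2 = 0} ≤ #A :=
  card_le_card_of_injOn Prod.fst (fun _ hab ↦ (mem_product.mp (mem_filter.mp hab).1).1)
    fun ab hab ab' hab' h ↦ Prod.ext h <| by
      rw [eq_neg_of_add_eq_zero_right (mem_filter.mp hab).2,
        eq_neg_of_add_eq_zero_right (mem_filter.mp hab').2, h]

theorem card_filter_add_eq_zero_le_right : #{ab ∈ A ×ˢ B | ab.1 + ab.2 = 0} ≤ #B :=
  card_le_card_of_injOn Prod.snd (fun _ hab ↦ (mem_product.mp (mem_filter.mp hab).1).2)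
    fun ab hab ab' hab' h ↦ Prod.ext (by
      rw [eq_neg_of_add_eq_zero_left (mem_filter.mp hab).2,
        eq_neg_of_add_eq_zero_left (mem_filter.mp hab').2, h]) h

end ZeroSumPairs

namespace MulChar

theorem exists_ne_one_forall_apply_eq_one {M : Type*} [CommMonoid M] [Finite M]
    {H : Subgroup Mˣ} (hH : H ≠ ⊤) :
    ∃ χ : MulChar M ℂ, χ ≠ 1 ∧ ∀ m ∈ H, χ m = 1 := by
  set D := (subgroupOrderIsoSubgroupMulChar M ℂ H).ofDual
  have hD : D ≠ ⊥ := by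
    intro h
    apply hH
    apply (subgroupOrderIsoSubgroupMulChar M ℂ).injective
    rw [OrderIso.map_top]
    exact congrArg OrderDual.toDual h
  obtain ⟨χ, hχD, hχ⟩ := D.bot_or_exists_ne_one.resolve_left hD
  exact ⟨χ, hχ, mem_subgroupOrderIsoSubgroupMulChar_iff.mp hχD⟩

variable {F : Type*} [Field F] [DecidableEq F] (χ : MulChar F ℂ)

theorem sum_sum_apply_add_of_forall {A B : Finset F}
    (hAB : ∀ a ∈ A, ∀ b ∈ B, a + b ≠ 0 → χ (a + b) = 1) :
    ∑ a ∈ A, ∑ b ∈ B, χ (a + b) = #A * #B - #{ab ∈ A ×ˢ B | ab.1 + ab.2 = 0} := by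
  rw [← sum_product' (f := fun a b ↦ χ (a + b))]
  have hterm : ∀ ab ∈ A ×ˢ B, χ (ab.1 + ab.2) = 1 - if ab.1 + ab.2 = 0 then 1 else 0 := by
    rintro ⟨a, b⟩ hab
    obtain ⟨ha, hb⟩ := mem_product.mp hab
    by_cases h : a + b = 0
    · simp [h]
    · simp [h, hAB a ha b hb h]
  rw [sum_congr rfl hterm, sum_sub_distrib, sum_boole]
  simp

variable [Fintype F]

-- at `x = 0` both sides vanish, the right one because `0⁻¹ = 0`
theorem apply_add_mul_star (c x : F) :
    χ (x + c) * star (χ x) = χ (1 + c * x⁻¹) - if x = 0 then 1 else 0 := by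
  rcases eq_or_ne x 0 with rfl | hx
  · simp
  · rw [star_apply', inv_apply', ← map_mul, add_mul, mul_inv_cancel₀ hx, if_neg hx, sub_zero]

theorem sum_apply_add_mul_star (hχ : χ ≠ 1) (c : F) :
    ∑ x, χ (x + c) * star (χ x) = if c = 0 then (Fintype.card F : ℂ) - 1 else -1 := by
  simp only [apply_add_mul_star, sum_sub_distrib, sum_ite_eq', mem_univ, if_true]
  split_ifs with hc
  · simp [hc]
  · have hsubst : ∑ x, χ (1 + c * x⁻¹) = ∑ y, χ y :=
      Fintype.sum_equiv ((Equiv.inv F).trans ((Equiv.mulLeft₀ c hc).trans (Equiv.addLeft 1)))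
        _ _ fun _ ↦ rfl
    rw [hsubst, sum_eq_zero_of_ne_one hχ, zero_sub]

theorem sum_apply_add_mul_star_apply_add (hχ : χ ≠ 1) (b b' : F) :
    ∑ x, χ (x + b) * star (χ (x + b')) = if b = b' then (Fintype.card F : ℂ) - 1 else -1 := by
  have hshift := χ.sum_apply_add_mul_star hχ (b - b')
  simp only [sub_eq_zero] at hshift
  rw [← hshift]
  exact Fintype.sum_equiv (Equiv.addRight b') _ _ fun x ↦ by simp

theorem sum_norm_sq_sum_apply_add (hχ : χ ≠ 1) (B : Finset F) :
    ∑ x, ‖∑ b ∈ B, χ (x + b)‖ ^ 2 = #B * (Fintype.card F - #B) := by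
  have hcomplex : ∑ x, (∑ b ∈ B, χ (x + b)) * star (∑ b ∈ B, χ (x + b)) =
      #B * (Fintype.card F - #B) := by
    simp_rw [star_sum, sum_mul_sum]
    rw [sum_comm]
    simp_rw [sum_comm (s := univ), χ.sum_apply_add_mul_star_apply_add hχ]
    have hite : ∀ b b' : F, (if b = b' then (Fintype.card F : ℂ) - 1 else -1) =
        (if b = b' then (Fintype.card F : ℂ) else 0) - 1 := fun b b' ↦ by split_ifs <;> ring
    simp only [hite, sum_sub_distrib, sum_ite_eq, sum_ite_mem, inter_self, sum_const,
      nsmul_eq_mul, mul_one]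
    ring
  simp_rw [RCLike.star_def, RCLike.mul_conj] at hcomplex
  apply Complex.ofReal_injective
  push_cast
  exact hcomplex

theorem card_mul_card_lt_of_forall_add_ne_zero (hχ : χ ≠ 1) {A B : Finset F}
    (hAB : ∀ a ∈ A, ∀ b ∈ B, a + b ≠ 0 → χ (a + b) = 1) :
    #A * #B < 4 * Fintype.card F := by
  set z := #{ab ∈ A ×ˢ B | ab.1 + ab.2 = 0}
  have hz : (z : ℝ) ^ 2 ≤ #A * #B := by
    have hzA : z ≤ #A := card_filter_add_eq_zero_le_left A B
    have hzB : z ≤ #B := card_filter_add_eq_zero_le_right A B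
    exact_mod_cast (sq z).trans_le (Nat.mul_le_mul hzA hzB)
  have hsum : ∑ a ∈ A, ∑ b ∈ B, χ (a + b) = ((#A * #B - z : ℝ) : ℂ) := by
    rw [χ.sum_sum_apply_add_of_forall hAB]
    push_cast
    rfl
  have hmoment : (#A * #B - z : ℝ) ^ 2 ≤ #A * #B * Fintype.card F :=
    calc (#A * #B - z : ℝ) ^ 2 = ‖∑ a ∈ A, ∑ b ∈ B, χ (a + b)‖ ^ 2 := by
          rw [hsum, Complex.norm_real, Real.norm_eq_abs, sq_abs]
      _ ≤ #A * ∑ a ∈ A, ‖∑ b ∈ B, χ (a + b)‖ ^ 2 := norm_sum_sq_le_card_mul_sum_norm_sq _ _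
      _ ≤ #A * ∑ x, ‖∑ b ∈ B, χ (x + b)‖ ^ 2 := by gcongr; exact subset_univ A
      _ = #A * (#B * (Fintype.card F - #B)) := by rw [χ.sum_norm_sq_sum_apply_add hχ]
      _ ≤ #A * #B * Fintype.card F := by
          nlinarith [(#A).cast_nonneg (α := ℝ), (#B).cast_nonneg (α := ℝ)]
  exact_mod_cast lt_four_mul_of_sq_sub_le hz hmoment (by exact_mod_cast Fintype.one_lt_card)

end MulChar

namespace MulSubgroup

variable {p : ℕ} {Γ : Finset (ZMod p)}

theorem inv_mem (hΓ : MulSubgroup Γ) {x : ZMod p} (hx : x ∈ Γ) : x⁻¹ ∈ Γ := by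
  simpa using hΓ.2.2 1 hΓ.2.1 x hx

def toSubgroup (hΓ : MulSubgroup Γ) : Subgroup (ZMod p)ˣ where
  carrier := {u | (u : ZMod p) ∈ Γ}
  one_mem' := hΓ.2.1
  mul_mem' {u v} hu hv := by
    simpa [ZMod.inv_coe_unit] using hΓ.2.2 _ hu _ (hΓ.inv_mem hv)
  inv_mem' {u} hu := by
    simpa [← ZMod.inv_coe_unit] using hΓ.inv_mem hu

theorem toSubgroup_ne_top [Fact p.Prime] (hΓ : MulSubgroup Γ) (hproper : Γ ⊂ univ \ {0}) :
    hΓ.toSubgroup ≠ ⊤ := by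
  obtain ⟨x, hx, hxΓ⟩ := exists_of_ssubset hproper
  have hx0 : x ≠ 0 := by simpa using hx
  intro htop
  have hxH : Units.mk0 x hx0 ∈ hΓ.toSubgroup := htop ▸ Subgroup.mem_top _
  exact hxΓ hxH

end MulSubgroup

theorem stmt_3 (p : ℕ) [Fact p.Prime] (Γ A B : Finset (ZMod p))
    (hΓ : MulSubgroup Γ) (hproper : Γ ⊂ Finset.univ \ {0})
    (hAB : A + B ⊆ Γ ∪ {0}) :
    A.card * B.card < 4 * p := by
  obtain ⟨χ, hχ, hχΓ⟩ :=
    MulChar.exists_ne_one_forall_apply_eq_one (hΓ.toSubgroup_ne_top hproper)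
  have hχAB : ∀ a ∈ A, ∀ b ∈ B, a + b ≠ 0 → χ (a + b) = 1 := fun a ha b hb hab ↦ by
    have hmem : a + b ∈ Γ := by simpa [hab] using hAB (add_mem_add ha hb)
    simpa using hχΓ (Units.mk0 (a + b) hab) hmem
  simpa [ZMod.card] using χ.card_mul_card_lt_of_forall_add_ne_zero hχ hχAB
end

section
/- Let X be a finite set with |X| = n, let δ ∈ (0,1], and let A_1, …, A_m ⊆ X be subsets with |A_j| ≥ δn for every j ∈ [m]. If m ≥ 2/δ, then there exist indices i ≠ j such that |A_i ∩ A_j| ≥ δ^2 n / 2. -/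
/-!
Double counting with `d x = #{i | x ∈ A i}`: the sets have total size `S = ∑ d x ≥ δ m n`, and the
ordered pairs `i ≠ j` have total intersection `T = ∑ d x ^ 2 - S ≥ S ^ 2 / n - S` by Cauchy–Schwarz.
Since `δ m ≥ 2`, this lower bound is at least `m (m - 1) δ ^ 2 n / 2`, so some pair reaches the average.
-/

open Finset

namespace Finset

variable {ι X : Type*} [Fintype ι] [DecidableEq X]

lemma sum_card_eq_sum_card_filter_mem [Fintype X] (A : ι → Finset X) :
    ∑ i, #(A i) = ∑ x, #{i | x ∈ A i} := by
  simp_rw [card_filter]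
  rw [sum_comm]
  simp

lemma sum_sum_card_inter_eq_sum_sq [Fintype X] (A : ι → Finset X) :
    ∑ i, ∑ j, #(A i ∩ A j) = ∑ x, #{i | x ∈ A i} ^ 2 := by
  have h (i j : ι) : #(A i ∩ A j) = ∑ x, if x ∈ A i ∧ x ∈ A j then 1 else 0 := by
    rw [← card_filter]; congr 1; ext; simp
  simp_rw [h, card_filter, sq, sum_mul_sum, ite_zero_mul_ite_zero, mul_one]
  exact (sum_congr rfl fun _ _ => sum_comm).trans sum_comm

lemma sum_card_inter_offDiag_add_sum_card [DecidableEq ι] (A : ι → Finset X) :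
    ∑ p ∈ univ.offDiag, #(A p.1 ∩ A p.2) + ∑ i, #(A i) = ∑ i, ∑ j, #(A i ∩ A j) := by
  rw [← sum_product' (f := fun i j => #(A i ∩ A j)), ← diag_union_offDiag,
    sum_union (disjoint_diag_offDiag _), sum_diag, add_comm]
  simp

lemma sq_sum_card_le_card_mul_sum_sum_card_inter [Fintype X] (A : ι → Finset X) :
    (∑ i, #(A i)) ^ 2 ≤ Fintype.card X * ∑ i, ∑ j, #(A i ∩ A j) := by
  rw [sum_card_eq_sum_card_filter_mem, sum_sum_card_inter_eq_sum_sq]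
  exact sq_sum_le_card_mul_sum_sq

end Finset

lemma mul_sub_mul_sq_div_two_le_of_sq_le_mul_add {n m δ S T : ℝ} (hn : 0 ≤ n) (hT : 0 ≤ T)
    (hδ : 0 ≤ δ) (hδm : 2 ≤ δ * m) (hS : δ * m * n ≤ S) (hST : S ^ 2 ≤ n * (T + S)) :
    (m * m - m) * (δ ^ 2 * n / 2) ≤ T := by
  rcases hn.eq_or_lt with rfl | hn
  · simpa using hT
  refine le_of_mul_le_mul_left ?_ hn
  have hn_le : n ≤ δ * m * n := by nlinarith
  calc n * ((m * m - m) * (δ ^ 2 * n / 2))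
      ≤ δ * m * n * (δ * m * n - n) := by
        -- the two sides differ by half of this product
        have : 0 ≤ n ^ 2 * (δ * m) * (δ * m + δ - 2) :=
          mul_nonneg (mul_nonneg (sq_nonneg n) (by linarith)) (by linarith)
        linarith
    _ ≤ S * (S - n) := by gcongr; linarith
    _ ≤ n * T := by linarith

theorem stmt_15 {X : Type*} [Fintype X] [DecidableEq X] (n : ℕ)
    (hn : Fintype.card X = n) (δ : ℝ) (hδ0 : 0 < δ) (hδ1 : δ ≤ 1)
    (m : ℕ) (A : Fin m → Finset X)
    (hA : ∀ j, δ * n ≤ ((A j).card : ℝ))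
    (hm : 2 / δ ≤ (m : ℝ)) :
    ∃ i j : Fin m, i ≠ j ∧ δ ^ 2 * n / 2 ≤ ((A i ∩ A j).card : ℝ) := by
  have hδm : 2 ≤ δ * m := by rwa [div_le_iff₀ hδ0, mul_comm] at hm
  have hm2 : 2 ≤ m := by exact_mod_cast (show (2 : ℝ) ≤ m by nlinarith)
  set S : ℝ := ∑ i, #(A i)
  set T : ℝ := ∑ p ∈ univ.offDiag, #(A p.1 ∩ A p.2)
  have hS : δ * m * n ≤ S :=
    calc δ * m * n = ∑ _j : Fin m, δ * n := by simp; ring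
      _ ≤ S := by simpa [S] using sum_le_sum fun j (_ : j ∈ univ) => hA j
  have hST : S ^ 2 ≤ n * (T + S) := by
    have := sq_sum_card_le_card_mul_sum_sum_card_inter A
    rw [← sum_card_inter_offDiag_add_sum_card, hn] at this
    simp only [S, T]
    exact_mod_cast this
  have hT := mul_sub_mul_sq_div_two_le_of_sq_le_mul_add (Nat.cast_nonneg n) (by positivity)
    hδ0.le hδm hS hST
  obtain ⟨p, hp, hle⟩ := exists_le_of_sum_le (s := univ.offDiag)
    (f := fun _ => δ ^ 2 * n / 2) (g := fun p => (#(A p.1 ∩ A p.2) : ℝ))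
    ⟨(⟨0, by omega⟩, ⟨1, by omega⟩), by simp [Fin.ext_iff]⟩
    (by simpa [offDiag_card, Nat.cast_sub (Nat.le_mul_self m)] using hT)
  exact ⟨p.1, p.2, (mem_offDiag.1 hp).2.2, hle⟩
end

section
/- There is an absolute constant K > 0 such that for every prime p and all sets A ⊆ F_p and P ⊆ F_p^* one has ( Σ_{x∈P} (A∘A)(x) )^4 ≤ K · T(A) · |A|^2 · min{ |P·P|, |P/P| }, where P·P = {p₁p₂ : p₁, p₂ ∈ P} and P/P = {p₁p₂^{−1} : p₁, p₂ ∈ P}. -/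
open Finset Pointwise

/-- `(X∘Y)(x) = #{(a,b) ∈ X×Y : b − a = x}`. -/
def conv {p : ℕ} (X Y : Finset (ZMod p)) (x : ZMod p) : ℕ :=
  ((X ×ˢ Y).filter fun ab => ab.2 - ab.1 = x).card

/-- Multiplicative energy `E^×(X,Y)`. -/
def mulE {p : ℕ} (X Y : Finset (ZMod p)) : ℕ :=
  (((X ×ˢ X) ×ˢ Y ×ˢ Y).filter fun t => t.1.1 * t.2.1 = t.1.2 * t.2.2).card

/-- `T(A,B,C,D) = Σ_{c∈C, d∈D} E^×(A−c, B−d)`. -/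
def trip {p : ℕ} (A B C D : Finset (ZMod p)) : ℕ :=
  ∑ c ∈ C, ∑ d ∈ D, mulE (A.image (· - c)) (B.image (· - d))

/-! Writing `X_a = (A - a) ∩ P`, the sum equals `∑_{a ∈ A} |X_a|`, so by Cauchy–Schwarz its square
is at most `|A| ∑_a |X_a|²`. Label each pair `(x, y) ∈ X_a²` by `x * y ∈ P * P` (resp. `x / y ∈ P / P`).
Cauchy–Schwarz over the labels bounds `(∑_a |X_a|²)²` by the number of labels times the number of
pairs of pairs with equal labels, and for fixed `a, a'` the latter is at most
`E^×(A - a, A - a')`: directly for ratios, and after one more Cauchy–Schwarz for products, since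
`x₁ x₂ = y₁ y₂` means `x₁ / y₁ = y₂ / x₂`. -/

open scoped Combinatorics.Additive

section Collisions

variable {ι α β γ : Type*} [DecidableEq γ]

lemma card_filter_prod_eq_sum_mul {s : Finset α} {t : Finset β} {U : Finset γ} {f : α → γ}
    (g : β → γ) (hf : ∀ x ∈ s, f x ∈ U) :
    #{w ∈ s ×ˢ t | f w.1 = g w.2} = ∑ c ∈ U, #{x ∈ s | f x = c} * #{y ∈ t | g y = c} := by
  calc #{w ∈ s ×ˢ t | f w.1 = g w.2}
      = ∑ x ∈ s, #{y ∈ t | g y = f x} := by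
        simp only [card_filter, sum_product, eq_comm]
    _ = ∑ c ∈ U, ∑ x ∈ s with f x = c, #{y ∈ t | g y = c} :=
        (sum_fiberwise_of_maps_to' hf fun c => #{y ∈ t | g y = c}).symm
    _ = ∑ c ∈ U, #{x ∈ s | f x = c} * #{y ∈ t | g y = c} := by
        simp only [sum_const, smul_eq_mul]

lemma sq_card_filter_prod_le (s : Finset α) (t : Finset β) (f : α → γ) (g : β → γ) :
    #{w ∈ s ×ˢ t | f w.1 = g w.2} ^ 2
      ≤ #{w ∈ s ×ˢ s | f w.1 = f w.2} * #{w ∈ t ×ˢ t | g w.1 = g w.2} := by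
  set U := s.image f ∪ t.image g
  have hf : ∀ x ∈ s, f x ∈ U := fun x hx => mem_union_left _ (mem_image_of_mem f hx)
  have hg : ∀ y ∈ t, g y ∈ U := fun y hy => mem_union_right _ (mem_image_of_mem g hy)
  rw [card_filter_prod_eq_sum_mul g hf, card_filter_prod_eq_sum_mul f hf,
    card_filter_prod_eq_sum_mul g hg]
  simpa only [sq] using sum_mul_sq_le_sq_mul_sq U (fun c => #{x ∈ s | f x = c})
    (fun c => #{y ∈ t | g y = c})

lemma sq_sum_card_le_card_mul_sum_sum {s : Finset ι} {X : ι → Finset α} {Q : Finset γ}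
    {ℓ : α → γ} (hℓ : ∀ i ∈ s, ∀ x ∈ X i, ℓ x ∈ Q) :
    (∑ i ∈ s, #(X i)) ^ 2 ≤ #Q * ∑ i ∈ s, ∑ j ∈ s, #{w ∈ X i ×ˢ X j | ℓ w.1 = ℓ w.2} := by
  calc (∑ i ∈ s, #(X i)) ^ 2
      = (∑ c ∈ Q, ∑ i ∈ s, #{x ∈ X i | ℓ x = c}) ^ 2 := by
        rw [sum_comm, sum_congr rfl fun i hi => card_eq_sum_card_fiberwise (hℓ i hi)]
    _ ≤ #Q * ∑ c ∈ Q, (∑ i ∈ s, #{x ∈ X i | ℓ x = c}) ^ 2 := sq_sum_le_card_mul_sum_sq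
    _ = #Q * ∑ i ∈ s, ∑ j ∈ s, ∑ c ∈ Q, #{x ∈ X i | ℓ x = c} * #{y ∈ X j | ℓ y = c} := by
        simp_rw [sq, sum_mul_sum]
        rw [sum_comm]
        simp_rw [sum_comm (s := Q)]
    _ = #Q * ∑ i ∈ s, ∑ j ∈ s, #{w ∈ X i ×ˢ X j | ℓ w.1 = ℓ w.2} := by
        congr 1
        refine sum_congr rfl fun i hi => sum_congr rfl fun j _ => ?_
        rw [card_filter_prod_eq_sum_mul ℓ (hℓ i hi)]

end Collisions

section Energy

variable {K : Type*} [CommGroupWithZero K] [DecidableEq K] {X Y : Finset K}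

lemma card_div_eq_div_le_mulEnergy' (hY : 0 ∉ Y) :
    #{w ∈ (X ×ˢ Y) ×ˢ (X ×ˢ Y) | w.1.1 / w.1.2 = w.2.1 / w.2.2} ≤ Eₘ[X, Y] := by
  refine card_le_card_of_injOn (fun w => ((w.1.1, w.2.1), (w.2.2, w.1.2))) ?_ ?_
  · rintro ⟨⟨x₁, y₁⟩, x₂, y₂⟩ hw
    simp only [mem_coe, mem_filter, mem_product] at hw
    obtain ⟨⟨⟨hx₁, hy₁⟩, hx₂, hy₂⟩, h⟩ := hw
    rw [div_eq_div_iff (ne_of_mem_of_not_mem hy₁ hY) (ne_of_mem_of_not_mem hy₂ hY)] at h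
    simp only [mem_coe, mem_filter, mem_product]
    exact ⟨⟨⟨hx₁, hx₂⟩, hy₂, hy₁⟩, h⟩
  · rintro ⟨⟨_, _⟩, _, _⟩ - ⟨⟨_, _⟩, _, _⟩ - h
    simp_all only [Prod.mk.injEq]

lemma card_div_eq_div_le_mulEnergy (hX : 0 ∉ X) (hY : 0 ∉ Y) :
    #{w ∈ (X ×ˢ X) ×ˢ (Y ×ˢ Y) | w.1.1 / w.1.2 = w.2.1 / w.2.2} ≤ Eₘ[X, Y] := by
  refine card_le_card_of_injOn (fun w => (w.1, (w.2.2, w.2.1))) ?_ ?_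
  · rintro ⟨⟨x₁, x₂⟩, y₁, y₂⟩ hw
    simp only [mem_coe, mem_filter, mem_product] at hw
    obtain ⟨⟨⟨hx₁, hx₂⟩, hy₁, hy₂⟩, h⟩ := hw
    rw [div_eq_div_iff (ne_of_mem_of_not_mem hx₂ hX) (ne_of_mem_of_not_mem hy₂ hY)] at h
    simp only [mem_coe, mem_filter, mem_product]
    exact ⟨⟨⟨hx₁, hx₂⟩, hy₂, hy₁⟩, by rw [h, mul_comm]⟩
  · rintro ⟨⟨_, _⟩, _, _⟩ - ⟨⟨_, _⟩, _, _⟩ - h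
    simp_all only [Prod.mk.injEq]

lemma card_mul_eq_mul_le_mulEnergy (hX : 0 ∉ X) (hY : 0 ∉ Y) :
    #{w ∈ (X ×ˢ X) ×ˢ (Y ×ˢ Y) | w.1.1 * w.1.2 = w.2.1 * w.2.2} ≤ Eₘ[X, Y] := by
  have hx : ∀ x ∈ X, x ≠ 0 := fun x hx => ne_of_mem_of_not_mem hx hX
  have hy : ∀ y ∈ Y, y ≠ 0 := fun y hy => ne_of_mem_of_not_mem hy hY
  have hswap : #{w ∈ (X ×ˢ X) ×ˢ (Y ×ˢ Y) | w.1.1 * w.1.2 = w.2.1 * w.2.2}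
      = #{w ∈ (X ×ˢ Y) ×ˢ (X ×ˢ Y) | w.1.1 / w.1.2 = w.2.2 / w.2.1} := by
    refine card_equiv (.prodProdProdComm _ _ _ _) fun ⟨⟨x₁, x₂⟩, y₁, y₂⟩ => ?_
    simp only [mem_filter, mem_product, Equiv.prodProdProdComm_apply]
    constructor
    · rintro ⟨⟨⟨hx₁, hx₂⟩, hy₁, hy₂⟩, h⟩
      refine ⟨⟨⟨hx₁, hy₁⟩, hx₂, hy₂⟩, ?_⟩
      rwa [div_eq_div_iff (hy y₁ hy₁) (hx x₂ hx₂), mul_comm y₂]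
    · rintro ⟨⟨⟨hx₁, hy₁⟩, hx₂, hy₂⟩, h⟩
      refine ⟨⟨⟨hx₁, hx₂⟩, hy₁, hy₂⟩, ?_⟩
      rwa [div_eq_div_iff (hy y₁ hy₁) (hx x₂ hx₂), mul_comm y₂] at h
  have hinv : #{w ∈ (X ×ˢ Y) ×ˢ (X ×ˢ Y) | w.1.2 / w.1.1 = w.2.2 / w.2.1}
      = #{w ∈ (X ×ˢ Y) ×ˢ (X ×ˢ Y) | w.1.1 / w.1.2 = w.2.1 / w.2.2} := by
    congr 1
    refine filter_congr fun w _ => ?_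
    rw [← inv_div, ← inv_div w.2.1, inv_inj]
  have hE := card_div_eq_div_le_mulEnergy' (X := X) hY
  have hcs := sq_card_filter_prod_le (X ×ˢ Y) (X ×ˢ Y) (fun u => u.1 / u.2) (fun v => v.2 / v.1)
  rw [hinv] at hcs
  rw [hswap, ← Nat.pow_le_pow_iff_left two_ne_zero]
  calc _ ≤ _ := hcs
    _ ≤ Eₘ[X, Y] ^ 2 := by rw [sq]; exact Nat.mul_le_mul hE hE

end Energy

section ZMod

variable {p : ℕ}

lemma sum_conv_eq_sum_card_inter (A P : Finset (ZMod p)) :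
    ∑ x ∈ P, conv A A x = ∑ a ∈ A, #(A.image (· - a) ∩ P) := by
  unfold conv
  rw [sum_card_fiberwise_eq_card_filter, card_filter, sum_product]
  refine sum_congr rfl fun a _ => ?_
  rw [← card_filter, ← filter_mem_eq_inter, filter_image,
    card_image_of_injective _ (sub_left_injective (b := a))]

lemma trip_eq_sum_sum_mulEnergy (A B C D : Finset (ZMod p)) :
    trip A B C D = ∑ c ∈ C, ∑ d ∈ D, Eₘ[A.image (· - c), B.image (· - d)] :=
  rfl

lemma sum_conv_pow_four_le (A P Q : Finset (ZMod p)) (hP : (0 : ZMod p) ∉ P)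
    (ℓ : ZMod p × ZMod p → ZMod p) (hℓQ : ∀ x ∈ P, ∀ y ∈ P, ℓ (x, y) ∈ Q)
    (hℓ : ∀ X Y : Finset (ZMod p), 0 ∉ X → 0 ∉ Y →
      #{w ∈ (X ×ˢ X) ×ˢ (Y ×ˢ Y) | ℓ w.1 = ℓ w.2} ≤ Eₘ[X, Y]) :
    (∑ x ∈ P, conv A A x) ^ 4 ≤ trip A A A A * #A ^ 2 * #Q := by
  set X : ZMod p → Finset (ZMod p) := fun a => A.image (· - a) ∩ P
  have hX : ∀ a, 0 ∉ X a := fun a h => hP (mem_inter.mp h).2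
  have hfirst : (∑ x ∈ P, conv A A x) ^ 2 ≤ #A * ∑ a ∈ A, #(X a ×ˢ X a) := by
    rw [sum_conv_eq_sum_card_inter]
    simp only [card_product, ← sq]
    exact_mod_cast sq_sum_le_card_mul_sum_sq
  have hsecond : (∑ a ∈ A, #(X a ×ˢ X a)) ^ 2 ≤ #Q * trip A A A A := by
    rw [trip_eq_sum_sum_mulEnergy]
    refine (sq_sum_card_le_card_mul_sum_sum (ℓ := ℓ) ?_).trans
      (Nat.mul_le_mul_left _ (sum_le_sum fun a _ => sum_le_sum fun a' _ => ?_))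
    · rintro a - ⟨x, y⟩ hxy
      rw [mem_product] at hxy
      exact hℓQ x (mem_inter.mp hxy.1).2 y (mem_inter.mp hxy.2).2
    · exact (hℓ _ _ (hX a) (hX a')).trans (mulEnergy_mono inter_subset_left inter_subset_left)
  calc (∑ x ∈ P, conv A A x) ^ 4 = ((∑ x ∈ P, conv A A x) ^ 2) ^ 2 := by ring
    _ ≤ (#A * ∑ a ∈ A, #(X a ×ˢ X a)) ^ 2 := Nat.pow_le_pow_left hfirst 2
    _ ≤ #A ^ 2 * (#Q * trip A A A A) := by rw [mul_pow]; exact Nat.mul_le_mul_left _ hsecond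
    _ = trip A A A A * #A ^ 2 * #Q := by ring

end ZMod

theorem stmt_19 :
    ∃ K : ℝ, 0 < K ∧ ∀ (p : ℕ) [Fact p.Prime],
      ∀ (A P : Finset (ZMod p)), (0 : ZMod p) ∉ P →
        (∑ x ∈ P, (conv A A x : ℝ)) ^ 4 ≤
          K * (trip A A A A : ℝ) * (A.card : ℝ) ^ 2 *
            (min (P * P).card (P / P).card : ℝ) := by
  refine ⟨1, one_pos, fun p _ A P hP => ?_⟩
  have hmul := sum_conv_pow_four_le A P (P * P) hP (fun u => u.1 * u.2)
    (fun _ hx _ hy => mul_mem_mul hx hy) fun _ _ hX hY => card_mul_eq_mul_le_mulEnergy hX hY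
  have hdiv := sum_conv_pow_four_le A P (P / P) hP (fun u => u.1 / u.2)
    (fun _ hx _ hy => div_mem_div hx hy) fun _ _ hX hY => card_div_eq_div_le_mulEnergy hX hY
  rw [one_mul]
  have hmin : (∑ x ∈ P, conv A A x) ^ 4 ≤ trip A A A A * #A ^ 2 * min #(P * P) #(P / P) := by
    rcases min_choice #(P * P) #(P / P) with h | h <;> rw [h] <;> assumption
  exact_mod_cast hmin
end
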